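/- Let x be a string over {0,1}. If 0·1^j·0 occurs as a substring of x for some j ≥ 1, then 0·1^{j+1}·0 occurs as a substring of σ(x); moreover, if 00 is a prefix of x, then 010 occurs as a substring of σ(x). -/
import Mathlib


/-- The morphism σ on {0,1} (0 ↦ false, 1 ↦ true) with σ(0) = 001 and σ(1) = 1,
given by its images on symbols. -/
def sigmaRule : Bool → List Bool
  | false => [false, false, true]
  | true => [true]

/-- The homomorphic extension of σ to strings. -/
def sigmaM (w : List Bool) : List Bool := w.flatMap sigmaRule

lemma sigmaM_append (a b : List Bool) : sigmaM (a ++ b) = sigmaM a ++ sigmaM b := by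
  simp [sigmaM]

lemma sigmaM_replicate_true (j : ℕ) :
    sigmaM (List.replicate j true) = List.replicate j true := by
  induction j with
  | zero => rfl
  | succ n ih =>
    rw [List.replicate_succ, show (true :: List.replicate n true) = [true] ++ List.replicate n true from rfl,
      sigmaM_append, ih]
    rfl

/-- If 0·1^j·0 occurs in x for some j ≥ 1, then 0·1^{j+1}·0 occurs in σ(x);
moreover, if 00 is a prefix of x, then 010 occurs in σ(x). -/
theorem sigma_propagates_runs (x : List Bool) :
    (∀ j, 1 ≤ j → ([false] ++ List.replicate j true ++ [false]) <:+: x →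
      ([false] ++ List.replicate (j + 1) true ++ [false]) <:+: sigmaM x) ∧
    ([false, false] <+: x → [false, true, false] <:+: sigmaM x) := by
  constructor
  · intro j _ h
    obtain ⟨s, t, hst⟩ := h
    subst hst
    rw [sigmaM_append, sigmaM_append, sigmaM_append, sigmaM_append, sigmaM_replicate_true]
    refine ⟨sigmaM s ++ [false], [false, true] ++ sigmaM t, ?_⟩
    rw [List.replicate_succ]
    simp [sigmaM, sigmaRule]
  · intro h
    obtain ⟨t, ht⟩ := h
    subst ht
    rw [sigmaM_append]
    exact ⟨[false], [false, true] ++ sigmaM t, by simp [sigmaM, sigmaRule]⟩
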